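/- Soundness of the Folk characterization for weak SPEs: if an initialized quantitative game (G, v_0) has a weak SPE σ̄, then for every history hv the set P_{α*}(hv) is nonempty and, moreover, the outcome of σ̄ from v_0 belongs to P_{α*}(v_0). In fact, for every ordinal α and every history hv, the outcome of the induced profile σ̄|_h from v is an element of P_α(hv). -/

import Mathlib

open Classical

noncomputable section

/-- A multiplayer turn-based quantitative game on a directed graph:
`owner` assigns each vertex to a player, `E` is the edge relation (every
vertex has a successor), and `cost i` is player `i`'s cost function on
infinite sequences of vertices (to be minimized), valued in `ℝ ∪ {±∞}`. -/
structure QGame (P V : Type) where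
  owner : V → P
  E : V → V → Prop
  succ_exists : ∀ v, ∃ v', E v v'
  cost : P → (ℕ → V) → EReal

namespace QGame

variable {P V : Type}

/-- An infinite play of the game: consecutive vertices are joined by edges. -/
def IsPlay (G : QGame P V) (ρ : ℕ → V) : Prop := ∀ n, G.E (ρ n) (ρ (n + 1))

/-- Concatenation `hρ` of a finite history `h` with an infinite play `ρ`. -/
def prepend (h : List V) (ρ : ℕ → V) : ℕ → V := fun n =>
  if hn : n < h.length then h.get ⟨n, hn⟩ else ρ (n - h.length)

/-- The prefix of length `n` of a play, as a list. -/
def playPrefix (ρ : ℕ → V) (n : ℕ) : List V := List.ofFn fun k : Fin n => ρ k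

/-- `hv` is a history of the game initialized at `v0`: here `h` is the strict
past and `v` the current vertex; the sequence `h ++ [v]` starts at `v0` and
follows edges. -/
def IsHist (G : QGame P V) (v0 : V) (h : List V) (v : V) : Prop :=
  (h ++ [v]).head? = some v0 ∧ List.Chain' G.E (h ++ [v])

/-- A (turn-based) strategy profile: given the past history and the current
vertex, choose the next vertex.  An individual strategy of player `i` is of
the same type; only its values at vertices owned by `i` matter. -/
abbrev Strat (P V : Type) := List V → V → V

/-- A profile/strategy is valid if it always follows edges. -/
def Valid (G : QGame P V) (σ : Strat P V) : Prop := ∀ h v, G.E v (σ h v)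

/-- History/current-vertex pair produced after `n` steps of `σ` from `v`. -/
def outcomeAux (σ : Strat P V) (v : V) : ℕ → List V × V
  | 0 => ([], v)
  | n + 1 =>
      let p := outcomeAux σ v n
      (p.1 ++ [p.2], σ p.1 p.2)

/-- The outcome play of profile `σ` from initial vertex `v`. -/
def outcome (σ : Strat P V) (v : V) (n : ℕ) : V := (outcomeAux σ v n).2

/-- The profile where player `i` unilaterally deviates to strategy `τ`
from the profile `σ`. -/
def devProf (G : QGame P V) (σ τ : Strat P V) (i : P) : Strat P V :=
  fun h v => if G.owner v = i then τ h v else σ h v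

/-- The set of deviation steps of `τ` from `σ` (for player `i`, from `v`):
positions `n` along the outcome of the deviated profile where the current
vertex belongs to player `i` and `τ` disagrees with `σ`. -/
def devSteps (G : QGame P V) (σ τ : Strat P V) (i : P) (v : V) : Set ℕ :=
  {n | G.owner (outcome (G.devProf σ τ i) v n) = i ∧
       σ (outcomeAux (G.devProf σ τ i) v n).1 (outcome (G.devProf σ τ i) v n) ≠
       τ (outcomeAux (G.devProf σ τ i) v n).1 (outcome (G.devProf σ τ i) v n)}

/-- `τ` is finitely deviating from `σ`. -/
def FinDev (G : QGame P V) (σ τ : Strat P V) (i : P) (v : V) : Prop :=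
  (G.devSteps σ τ i v).Finite

/-- `τ` is one-shot deviating from `σ`: its unique deviation step is at the
initial vertex. -/
def OneShotDev (G : QGame P V) (σ τ : Strat P V) (i : P) (v : V) : Prop :=
  G.devSteps σ τ i v = {0}

/-- Nash equilibrium of the profile `σ` from `v`, with respect to a cost
assignment `c` (no player has a profitable unilateral deviation). -/
def IsNEwith (G : QGame P V) (c : P → (ℕ → V) → EReal) (σ : Strat P V) (v : V) : Prop :=
  ∀ i τ, G.Valid τ →
    c i (outcome σ v) ≤ c i (outcome (G.devProf σ τ i) v)

/-- Weak Nash equilibrium: no profitable finitely deviating strategy. -/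
def IsWeakNEwith (G : QGame P V) (c : P → (ℕ → V) → EReal) (σ : Strat P V) (v : V) : Prop :=
  ∀ i τ, G.Valid τ → G.FinDev σ τ i v →
    c i (outcome σ v) ≤ c i (outcome (G.devProf σ τ i) v)

/-- Very weak Nash equilibrium: no profitable one-shot deviating strategy. -/
def IsVeryWeakNEwith (G : QGame P V) (c : P → (ℕ → V) → EReal) (σ : Strat P V) (v : V) : Prop :=
  ∀ i τ, G.Valid τ → G.OneShotDev σ τ i v →
    c i (outcome σ v) ≤ c i (outcome (G.devProf σ τ i) v)

/-- The strategy profile induced by `σ` in the subgame after history `h`. -/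
def subStrat (σ : Strat P V) (h : List V) : Strat P V := fun g v => σ (h ++ g) v

/-- The cost functions of the subgame after history `h`. -/
def subCost (G : QGame P V) (h : List V) : P → (ℕ → V) → EReal :=
  fun i ρ => G.cost i (prepend h ρ)

/-- Subgame perfect equilibrium: Nash equilibrium in every subgame. -/
def IsSPE (G : QGame P V) (v0 : V) (σ : Strat P V) : Prop :=
  ∀ h v, G.IsHist v0 h v → G.IsNEwith (G.subCost h) (subStrat σ h) v

/-- Weak subgame perfect equilibrium: weak NE in every subgame. -/
def IsWeakSPE (G : QGame P V) (v0 : V) (σ : Strat P V) : Prop :=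
  ∀ h v, G.IsHist v0 h v → G.IsWeakNEwith (G.subCost h) (subStrat σ h) v

/-- Very weak subgame perfect equilibrium: very weak NE in every subgame. -/
def IsVeryWeakSPE (G : QGame P V) (v0 : V) (σ : Strat P V) : Prop :=
  ∀ h v, G.IsHist v0 h v → G.IsVeryWeakNEwith (G.subCost h) (subStrat σ h) v

/-- One elimination step: `ρ` (a potential outcome in the subgame after `h`)
is erased if some player `i` controlling a vertex `ρ n` along `hρ` has an
alternative edge to some `v' ≠ ρ (n+1)` such that every play `ρ'` in the
current potential set after the extended history gives `i` a strictly
smaller cost than `hρ`. -/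
def Eset (G : QGame P V) (Pr : List V → V → Set (ℕ → V)) (h : List V) :
    Set (ℕ → V) :=
  {ρ | ∃ n v', G.E (ρ n) v' ∧ v' ≠ ρ (n + 1) ∧
      ∀ ρ' ∈ Pr (h ++ playPrefix ρ (n + 1)) v',
        G.cost (G.owner (ρ n)) (prepend (h ++ playPrefix ρ (n + 1)) ρ') <
          G.cost (G.owner (ρ n)) (prepend h ρ)}

/-- The transfinite sequence `P_α(hv)` of sets of potential outcomes of weak
Nash equilibria in the subgame `(G|_h, v)`: all plays at stage `0`, removal
of `E_α` at successors, intersections at limits. -/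
def Pset (G : QGame P V) (α : Ordinal) : List V → V → Set (ℕ → V) :=
  Ordinal.limitRecOn (motive := fun _ => List V → V → Set (ℕ → V)) α
    (fun _h v => {ρ | G.IsPlay ρ ∧ ρ 0 = v})
    (fun _ Pr => fun h v => Pr h v \ G.Eset Pr h)
    (fun α _ Pr => fun h v => ⋂ (β : Ordinal) (hβ : β < α), Pr β hβ h v)

/-- A sequence of plays converges to `ρ` (in the product topology on `V^ω`
with `V` discrete) iff every finite prefix of `ρ` is eventually a prefix of
the members of the sequence. -/
def Converges (ρs : ℕ → ℕ → V) (ρ : ℕ → V) : Prop :=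
  ∀ m, ∃ N, ∀ n ≥ N, ∀ k ≤ m, ρs n k = ρ k

/-- Upper semicontinuity of a cost function on plays. -/
def USCcost (G : QGame P V) (c : (ℕ → V) → EReal) : Prop :=
  ∀ (ρs : ℕ → ℕ → V) (ρ : ℕ → V), (∀ n, G.IsPlay (ρs n)) → G.IsPlay ρ →
    Converges ρs ρ →
      Filter.limsup (fun n => c (ρs n)) Filter.atTop ≤ c ρ

/-- A strategy (profile) is finite-memory if it is computed by a Moore
machine: a finite set `M` of memory states, updated while reading the
history, determines the move. -/
def FinMem (σ : Strat P V) : Prop :=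
  ∃ (M : Type) (_ : Finite M) (m0 : M) (upd : M → V → M) (act : M → V → V),
    ∀ h v, σ h v = act (h.foldl upd m0) v

/-- Quantitative reachability cost: the least index at which `ρ` visits the
target set `T`, and `+∞` if `T` is never visited. -/
def reachCost (T : Set V) (ρ : ℕ → V) : EReal :=
  if h : ∃ n, ρ n ∈ T then ((Nat.find h : ℕ) : EReal) else ⊤

/-- `G` is a quantitative reachability game with target sets `T i`. -/
def IsReachGame (G : QGame P V) (T : P → Set V) : Prop :=
  ∀ i ρ, G.cost i ρ = reachCost (T i) ρ

/-- The set of players that have not visited their target set along the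
history `h`. -/
def Iset (T : P → Set V) (h : List V) : Set P := {i | ∀ u ∈ h, u ∉ T i}

end QGame

/-!
By induction on `α`, the outcome of `σ|_h` from `v` survives every stage `P_α(hv)`. At a
successor stage, suppose it were erased through an exit `h'v'`, every play of `P_α(h'v')` being
strictly cheaper there for the owner `i` of the last vertex of `h'`. By induction the outcome of
`σ|_{h'}` from `v'` is such a play. But taking the edge to `v'` once and following `σ` afterwards
is a finitely deviating strategy of `i` in the subgame at `hv`, whose outcome is exactly that
play, contradicting that `σ|_h` is a weak Nash equilibrium.
-/

namespace QGame

variable {P V : Type}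

section Plays

@[simp]
lemma length_playPrefix (ρ : ℕ → V) (n : ℕ) : (playPrefix ρ n).length = n := by
  simp [playPrefix]

lemma playPrefix_succ (ρ : ℕ → V) (n : ℕ) :
    playPrefix ρ (n + 1) = playPrefix ρ n ++ [ρ n] := by
  rw [playPrefix, List.ofFn_succ']
  simp [playPrefix]

lemma playPrefix_congr {ρ ρ' : ℕ → V} {n : ℕ} (h : ∀ k < n, ρ k = ρ' k) :
    playPrefix ρ n = playPrefix ρ' n :=
  List.ofFn_inj.2 (funext fun k => h k k.2)

lemma prepend_length_add (h : List V) (ρ : ℕ → V) (k : ℕ) :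
    prepend h ρ (h.length + k) = ρ k := by
  simp [prepend]

lemma prepend_playPrefix_of_lt (ρ ρ' : ℕ → V) {n k : ℕ} (hk : k < n) :
    prepend (playPrefix ρ n) ρ' k = ρ k := by
  simp [prepend, hk, playPrefix]

lemma playPrefix_prepend_length_add (h : List V) (ρ : ℕ → V) (k : ℕ) :
    playPrefix (prepend h ρ) (h.length + k) = h ++ playPrefix ρ k := by
  induction k with
  | zero =>
    refine List.ext_getElem (by simp) fun k hk _ => ?_
    simp [playPrefix, prepend]
  | succ k ih =>
    rw [← add_assoc, playPrefix_succ, ih, playPrefix_succ, prepend_length_add,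
      List.append_assoc]

lemma prepend_append (a b : List V) (ρ : ℕ → V) :
    prepend (a ++ b) ρ = prepend a (prepend b ρ) := by
  funext n
  simp only [prepend, List.length_append, List.get_eq_getElem]
  by_cases ha : n < a.length
  · rw [dif_pos (by omega), dif_pos ha, List.getElem_append_left ha]
  · by_cases hab : n < a.length + b.length
    · rw [dif_pos hab, dif_neg ha, List.getElem_append_right (by omega), dif_pos (by omega)]
    · rw [dif_neg hab, dif_neg ha, dif_neg (by omega), Nat.sub_sub]

end Plays

section Outcomes

lemma outcomeAux_fst (σ : Strat P V) (v : V) (n : ℕ) :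
    (outcomeAux σ v n).1 = playPrefix (outcome σ v) n := by
  induction n with
  | zero => simp [outcomeAux, playPrefix]
  | succ n ih =>
    simp only [outcomeAux, playPrefix_succ, ih]
    rfl

lemma outcome_succ (σ : Strat P V) (v : V) (n : ℕ) :
    outcome σ v (n + 1) = σ (playPrefix (outcome σ v) n) (outcome σ v n) := by
  rw [← outcomeAux_fst]
  rfl

lemma outcome_eq_of_succ {σ : Strat P V} {v : V} {ρ : ℕ → V} (h0 : ρ 0 = v)
    (hsucc : ∀ k, ρ (k + 1) = σ (playPrefix ρ k) (ρ k)) : outcome σ v = ρ := by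
  funext k
  induction k using Nat.strong_induction_on with
  | _ k ih =>
    rcases k with _ | k
    · exact h0.symm
    · rw [outcome_succ, hsucc, playPrefix_congr fun j hj => ih j (by omega), ih k (by omega)]

lemma isPlay_outcome {G : QGame P V} {σ : Strat P V} (hσ : G.Valid σ) (v : V) :
    G.IsPlay (outcome σ v) := fun n => by
  rw [outcome_succ]
  exact hσ _ _

lemma subStrat_subStrat (σ : Strat P V) (h g : List V) :
    subStrat (subStrat σ h) g = subStrat σ (h ++ g) := by
  funext g' w
  simp [subStrat]

lemma Valid.subStrat {G : QGame P V} {σ : Strat P V} (hσ : G.Valid σ) (h : List V) :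
    G.Valid (subStrat σ h) := fun _ _ => hσ _ _

end Outcomes

section Histories

lemma IsHist.snoc {G : QGame P V} {v0 : V} {h : List V} {v v' : V} (hh : G.IsHist v0 h v)
    (he : G.E v v') : G.IsHist v0 (h ++ [v]) v' := by
  obtain ⟨hhead, hchain⟩ := hh
  refine ⟨by simpa [List.head?_append] using hhead, hchain.append (List.isChain_singleton _) ?_⟩
  simp [he]

lemma IsHist.append_playPrefix {G : QGame P V} {v0 : V} {h : List V} {ρ : ℕ → V}
    (hh : G.IsHist v0 h (ρ 0)) (hρ : G.IsPlay ρ) {n : ℕ} {v' : V} (he : G.E (ρ n) v') :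
    G.IsHist v0 (h ++ playPrefix ρ (n + 1)) v' := by
  induction n generalizing v' with
  | zero => simpa [playPrefix] using hh.snoc he
  | succ n ih =>
    rw [playPrefix_succ, ← List.append_assoc]
    exact (ih (hρ n)).snoc he

end Histories

section Redirect

def redirect (σ : Strat P V) (g : List V) (w v' : V) : Strat P V :=
  fun g' w' => if g' = g ∧ w' = w then v' else σ g' w'

variable {G : QGame P V} {σ : Strat P V} {g : List V} {w v' : V}

lemma Valid.redirect (hσ : G.Valid σ) (he : G.E w v') : G.Valid (redirect σ g w v') := by
  intro g' w'
  unfold QGame.redirect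
  split_ifs with hc
  · exact hc.2 ▸ he
  · exact hσ g' w'

lemma devProf_redirect : G.devProf σ (redirect σ g w v') (G.owner w) = redirect σ g w v' := by
  funext g' w'
  unfold devProf QGame.redirect
  split_ifs with h₁ h₂ h₂ <;> first | rfl | exact absurd (h₂.2 ▸ rfl) h₁

lemma finDev_redirect (i : P) (v : V) : G.FinDev σ (redirect σ g w v') i v := by
  refine (Set.finite_singleton g.length).subset fun m ⟨_, hm⟩ => ?_
  rw [outcomeAux_fst] at hm
  by_contra hne
  refine hm (if_neg ?_).symm
  rintro ⟨hg, -⟩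
  exact hne (by simpa using congrArg List.length hg)

lemma outcome_redirect (v : V) (n : ℕ) :
    let ρ := outcome σ v
    outcome (redirect σ (playPrefix ρ n) (ρ n) v') v =
      prepend (playPrefix ρ (n + 1)) (outcome (subStrat σ (playPrefix ρ (n + 1))) v') := by
  intro ρ
  set ρ' := outcome (subStrat σ (playPrefix ρ (n + 1))) v'
  have hlow : ∀ k ≤ n, playPrefix (prepend (playPrefix ρ (n + 1)) ρ') k = playPrefix ρ k :=
    fun k hk => playPrefix_congr fun j hj => prepend_playPrefix_of_lt _ _ (by omega)
  refine outcome_eq_of_succ (prepend_playPrefix_of_lt _ _ n.succ_pos) fun k => ?_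
  unfold QGame.redirect
  rcases lt_trichotomy k n with hk | rfl | hk
  · rw [hlow k hk.le, if_neg (fun hc => absurd (congrArg List.length hc.1) (by simp; omega)),
      prepend_playPrefix_of_lt _ _ (by omega), prepend_playPrefix_of_lt _ _ (by omega)]
    exact outcome_succ σ v k
  · rw [hlow k le_rfl, if_pos ⟨rfl, prepend_playPrefix_of_lt _ _ (by omega)⟩]
    have := prepend_length_add (playPrefix ρ (k + 1)) ρ' 0
    rw [length_playPrefix, add_zero] at this
    exact this
  · obtain ⟨j, rfl⟩ : ∃ j, k = (n + 1) + j := ⟨k - (n + 1), by omega⟩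
    have hpre := playPrefix_prepend_length_add (playPrefix ρ (n + 1)) ρ' j
    have hcur := prepend_length_add (playPrefix ρ (n + 1)) ρ' j
    have hnext := prepend_length_add (playPrefix ρ (n + 1)) ρ' (j + 1)
    rw [length_playPrefix] at hpre hcur hnext
    rw [hpre, hcur, add_assoc, hnext,
      if_neg (fun hc => absurd (congrArg List.length hc.1) (by simp; omega))]
    exact outcome_succ _ _ _

end Redirect

/-- Taking another edge once and then following `σ` is a finitely deviating strategy, so in a
weak NE it is never profitable. -/
lemma IsWeakNEwith.le_cost_redirect {G : QGame P V} {c : P → (ℕ → V) → EReal}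
    {σ : Strat P V} {v : V} (hσ : G.Valid σ) (hNE : G.IsWeakNEwith c σ v) {n : ℕ} {v' : V}
    (he : G.E (outcome σ v n) v') :
    let ρ := outcome σ v
    c (G.owner (ρ n)) ρ ≤
      c (G.owner (ρ n)) (prepend (playPrefix ρ (n + 1))
        (outcome (subStrat σ (playPrefix ρ (n + 1))) v')) := by
  intro ρ
  have := hNE (G.owner (ρ n)) _ (hσ.redirect he) (finDev_redirect (g := playPrefix ρ n) _ v)
  rwa [devProf_redirect, outcome_redirect] at this

lemma Pset_zero (G : QGame P V) :
    G.Pset 0 = fun _h v => {ρ | G.IsPlay ρ ∧ ρ 0 = v} :=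
  Ordinal.limitRecOn_zero _ _ _

lemma Pset_add_one (G : QGame P V) (α : Ordinal) :
    G.Pset (α + 1) = fun h v => G.Pset α h v \ G.Eset (G.Pset α) h :=
  Ordinal.limitRecOn_add_one _ _ _ _

lemma Pset_of_isSuccLimit (G : QGame P V) {α : Ordinal} (hα : Order.IsSuccLimit α) :
    G.Pset α = fun h v => ⋂ (β : Ordinal) (_ : β < α), G.Pset β h v :=
  Ordinal.limitRecOn_limit _ _ _ _ hα

lemma IsWeakSPE.outcome_subStrat_mem_Pset {G : QGame P V} {v0 : V} {σ : Strat P V}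
    (hσ : G.Valid σ) (hW : G.IsWeakSPE v0 σ) (α : Ordinal) {h : List V} {v : V}
    (hv : G.IsHist v0 h v) : outcome (subStrat σ h) v ∈ G.Pset α h v := by
  induction α using Ordinal.limitRecOn generalizing h v with
  | zero => exact G.Pset_zero ▸ ⟨isPlay_outcome (hσ.subStrat h) v, rfl⟩
  | add_one α ih =>
    rw [Pset_add_one]
    refine ⟨ih hv, fun ⟨n, v', he, _, hlt⟩ => ?_⟩
    have hdev := (hW h v hv).le_cost_redirect (hσ.subStrat h) he
    have hmem := ih (hv.append_playPrefix (isPlay_outcome (hσ.subStrat h) v) he)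
    simp only [subCost, subStrat_subStrat, ← prepend_append] at hdev
    exact (hlt _ hmem).not_ge hdev
  | limit α hα ih =>
    rw [Pset_of_isSuccLimit G hα]
    exact Set.mem_iInter₂.2 fun β hβ => ih β hβ hv

end QGame

open QGame in
theorem weakSPE_outcome_mem_Pset_general {P V : Type}
    (G : QGame P V) (v0 : V) (σ : Strat P V) (hσ : G.Valid σ)
    (hW : G.IsWeakSPE v0 σ) :
    (∀ (α : Ordinal) (h : List V) (v : V), G.IsHist v0 h v →
        outcome (subStrat σ h) v ∈ G.Pset α h v) ∧
    (∀ (α : Ordinal) (h : List V) (v : V), G.IsHist v0 h v →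
        (G.Pset α h v).Nonempty) ∧
    (∀ α : Ordinal, outcome σ v0 ∈ G.Pset α [] v0) :=
  ⟨fun α _ _ hv => hW.outcome_subStrat_mem_Pset hσ α hv,
    fun α _ _ hv => ⟨_, hW.outcome_subStrat_mem_Pset hσ α hv⟩,
    fun α => hW.outcome_subStrat_mem_Pset hσ α (h := []) ⟨rfl, List.isChain_singleton v0⟩⟩

open QGame in
/-- Soundness of the Folk characterization for weak SPEs:
if `σ` is a weak SPE of `(G, v0)`, then for every ordinal `α` and every
history `hv` the outcome of the induced profile `σ|_h` from `v` belongs to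
`P_α(hv)`; in particular every `P_α(hv)` (hence `P_{α*}(hv)`) is nonempty,
and the outcome of `σ` from `v0` lies in `P_α(v0)` for all `α` (hence in
`P_{α*}(v0)`). -/
theorem weakSPE_outcome_mem_Pset {P V : Type} [Finite P] [Finite V]
    (G : QGame P V) (v0 : V) (σ : Strat P V) (hσ : G.Valid σ)
    (hW : G.IsWeakSPE v0 σ) :
    (∀ (α : Ordinal) (h : List V) (v : V), G.IsHist v0 h v →
        outcome (subStrat σ h) v ∈ G.Pset α h v) ∧
    (∀ (α : Ordinal) (h : List V) (v : V), G.IsHist v0 h v →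
        (G.Pset α h v).Nonempty) ∧
    (∀ α : Ordinal, outcome σ v0 ∈ G.Pset α [] v0) :=
  weakSPE_outcome_mem_Pset_general G v0 σ hσ hW
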